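/- arXiv:math/9907132 — 2 statements merged into one kernel-verified Lean document; each statement's English description precedes it below -/
import Mathlib

section
/- Let f : [0,1] → ℝ be continuous with f(0)=f(1)=0, f > 0 on (0,1), and suppose inf_{s∈[ε,1-ε]} f(s) ≥ cε for some constant c > 0 and all ε ∈ (0,1/2). Let T : ℝ → [0,1] be continuously differentiable with T(x) → 1 as x → -∞ and T(x) → 0 as x → +∞. Then (∫_ℝ f(T(x)) dx) · (∫_ℝ T'(x)² dx) ≥ C, where C > 0 depends only on c. -/
/-!
Let `[a, b]` be a stretch on which the front `T` descends from `3/4` to `1/4` while staying in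
`[1/4, 3/4]`. There `f ∘ T ≥ c/4`, so the reaction integral is at least `c (b - a) / 4`, while
Cauchy–Schwarz gives `(1/2)² ≤ (b - a) ∫ₐᵇ T'²`. The length `b - a` cancels in the product,
leaving `c / 16`.
-/

open Set MeasureTheory Filter

theorem sq_intervalIntegral_le_mul_intervalIntegral_sq {g : ℝ → ℝ} {a b : ℝ} (hab : a ≤ b)
    (hg : IntervalIntegrable g volume a b) (hg2 : IntervalIntegrable (fun x => g x ^ 2) volume a b) :
    (∫ x in a..b, g x) ^ 2 ≤ (b - a) * ∫ x in a..b, g x ^ 2 := by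
  rcases hab.eq_or_lt with rfl | hab
  · simp
  set m := (∫ x in a..b, g x) / (b - a)
  have hm : ∫ x in a..b, g x = (b - a) * m := (mul_div_cancel₀ _ (sub_pos.mpr hab).ne').symm
  -- Cauchy–Schwarz as the nonnegativity of the variance of `g` around its mean `m`.
  have hvar : ∫ x in a..b, (g x - m) ^ 2
      = (∫ x in a..b, g x ^ 2) - 2 * m * (∫ x in a..b, g x) + (b - a) * m ^ 2 := by
    have hexp : ∀ x, (g x - m) ^ 2 = g x ^ 2 - 2 * m * g x + m ^ 2 := fun x => by ring
    simp_rw [hexp]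
    rw [intervalIntegral.integral_add (hg2.sub (hg.const_mul _)) intervalIntegrable_const,
      intervalIntegral.integral_sub hg2 (hg.const_mul _), intervalIntegral.integral_const_mul,
      intervalIntegral.integral_const, smul_eq_mul]
  have hnonneg : 0 ≤ ∫ x in a..b, (g x - m) ^ 2 :=
    intervalIntegral.integral_nonneg hab.le fun x _ => sq_nonneg _
  rw [hvar, hm] at hnonneg
  rw [hm]
  nlinarith [sub_pos.mpr hab]

theorem sq_sub_le_mul_integral_deriv_sq {T T' : ℝ → ℝ} {a b : ℝ} (hab : a ≤ b)
    (hT : ∀ x ∈ uIcc a b, HasDerivAt T (T' x) x) (hT' : ContinuousOn T' (uIcc a b)) :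
    (T b - T a) ^ 2 ≤ (b - a) * ∫ x in a..b, T' x ^ 2 := by
  rw [← intervalIntegral.integral_eq_sub_of_hasDerivAt hT hT'.intervalIntegrable]
  exact sq_intervalIntegral_le_mul_intervalIntegral_sq hab hT'.intervalIntegrable
    (hT'.pow 2).intervalIntegrable

theorem exists_Ioo_mapsTo_Icc_of_le_of_le {T : ℝ → ℝ} (hT : Continuous T) {lo hi a₀ b₀ : ℝ}
    (hlo : lo < hi) (hab₀ : a₀ ≤ b₀) (ha₀ : hi ≤ T a₀) (hb₀ : T b₀ ≤ lo) :
    ∃ a b, a < b ∧ hi ≤ T a ∧ T b ≤ lo ∧ MapsTo T (Ioo a b) (Icc lo hi) := by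
  -- `a` is the last time in `[a₀, b₀]` with `T ≥ hi`, `b` the first one after `a` with `T ≤ lo`.
  set A := Icc a₀ b₀ ∩ {x | hi ≤ T x}
  have hA : IsCompact A := isCompact_Icc.inter_right (isClosed_le continuous_const hT)
  have haA : sSup A ∈ A := hA.sSup_mem ⟨a₀, ⟨le_rfl, hab₀⟩, ha₀⟩
  set B := Icc (sSup A) b₀ ∩ {x | T x ≤ lo}
  have hB : IsCompact B := isCompact_Icc.inter_right (isClosed_le hT continuous_const)
  have hbB : sInf B ∈ B := hB.sInf_mem ⟨b₀, ⟨haA.1.2, le_rfl⟩, hb₀⟩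
  have hab : sSup A < sInf B := hbB.1.1.lt_of_ne fun h => by
    have : hi ≤ T (sInf B) := h ▸ haA.2
    exact (this.trans hbB.2).not_gt hlo
  refine ⟨sSup A, sInf B, hab, haA.2, hbB.2, fun x hx => ⟨?_, ?_⟩⟩
  · by_contra! h
    exact (csInf_le hB.bddBelow ⟨⟨hx.1.le, hx.2.le.trans hbB.1.2⟩, h.le⟩).not_gt hx.2
  · by_contra! h
    exact (le_csSup hA.bddAbove ⟨⟨haA.1.1.trans hx.1.le, hx.2.le.trans hbB.1.2⟩, h.le⟩).not_gt hx.1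

theorem mul_sub_le_integral_of_le_on_Ioo {g : ℝ → ℝ} {a b k : ℝ} (hab : a ≤ b)
    (hg : Integrable g) (hg0 : 0 ≤ g) (hk : ∀ x ∈ Ioo a b, k ≤ g x) :
    k * (b - a) ≤ ∫ x, g x :=
  calc k * (b - a) = k * volume.real (Ioo a b) := by
        rw [Real.volume_real_Ioo_of_le hab]
    _ ≤ ∫ x in Ioo a b, g x :=
        setIntegral_ge_of_const_le_real measurableSet_Ioo (by simp) hk hg.integrableOn
    _ ≤ ∫ x, g x := setIntegral_le_integral hg (.of_forall hg0)

theorem nonneg_of_pos_on_Ioo {f : ℝ → ℝ} {a b : ℝ} (ha : 0 ≤ f a) (hb : 0 ≤ f b)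
    (hpos : ∀ x ∈ Ioo a b, 0 < f x) {x : ℝ} (hx : x ∈ Icc a b) : 0 ≤ f x := by
  rcases hx.1.eq_or_lt with rfl | hax
  · exact ha
  rcases hx.2.eq_or_lt with rfl | hxb
  · exact hb
  exact (hpos x ⟨hax, hxb⟩).le

/-- For a front-like profile, the product of the reaction integral
and the Dirichlet integral is bounded below by a constant depending only on c. -/
theorem reaction_dirichlet_lower_bound (c : ℝ) (hc : 0 < c) :
    ∃ C > 0, ∀ f : ℝ → ℝ, ContinuousOn f (Icc 0 1) → f 0 = 0 → f 1 = 0 →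
      (∀ x ∈ Ioo (0:ℝ) 1, 0 < f x) →
      (∀ ε ∈ Ioo (0:ℝ) (1/2), ∀ s ∈ Icc ε (1 - ε), c * ε ≤ f s) →
      ∀ T T' : ℝ → ℝ, (∀ x, HasDerivAt T (T' x) x) → Continuous T' →
        (∀ x, T x ∈ Icc (0:ℝ) 1) →
        Tendsto T atBot (nhds 1) → Tendsto T atTop (nhds 0) →
        Integrable (fun x => f (T x)) →
        Integrable (fun x => (T' x) ^ 2) →
        C ≤ (∫ x, f (T x)) * (∫ x, (T' x) ^ 2) := by
  refine ⟨c / 16, by positivity, ?_⟩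
  intro f _ hf0 hf1 hfpos hfε T T' hT hT' hTmem hbot htop hfint hDint
  obtain ⟨a₀, ha₀⟩ : ∃ a₀, 1 - 1 / 4 ≤ T a₀ :=
    (hbot.eventually (eventually_ge_nhds (by norm_num))).exists
  obtain ⟨b₀, hab₀, hb₀⟩ : ∃ b₀, a₀ ≤ b₀ ∧ T b₀ ≤ 1 / 4 :=
    ((eventually_ge_atTop a₀).and (htop.eventually (eventually_le_nhds (by norm_num)))).exists
  obtain ⟨a, b, hab, ha, hb, hmid⟩ := exists_Ioo_mapsTo_Icc_of_le_of_le
    (continuous_iff_continuousAt.mpr fun x => (hT x).continuousAt) (by norm_num) hab₀ ha₀ hb₀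
  have hfT : ∀ x, 0 ≤ f (T x) := fun x => nonneg_of_pos_on_Ioo hf0.ge hf1.ge hfpos (hTmem x)
  have hreact : c * (1 / 4) * (b - a) ≤ ∫ x, f (T x) :=
    mul_sub_le_integral_of_le_on_Ioo hab.le hfint hfT
      fun x hx => hfε _ (by norm_num) _ (hmid hx)
  have hdir : (T b - T a) ^ 2 ≤ (b - a) * ∫ x in a..b, T' x ^ 2 :=
    sq_sub_le_mul_integral_deriv_sq hab.le (fun x _ => hT x) hT'.continuousOn
  have hdir_le : ∫ x in a..b, T' x ^ 2 ≤ ∫ x, T' x ^ 2 := by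
    rw [intervalIntegral.integral_of_le hab.le]
    exact setIntegral_le_integral hDint (.of_forall fun x => sq_nonneg _)
  have hdir_nonneg : 0 ≤ ∫ x in a..b, T' x ^ 2 :=
    intervalIntegral.integral_nonneg hab.le fun x _ => sq_nonneg _
  have hgap : 1 / 4 ≤ (b - a) * ∫ x in a..b, T' x ^ 2 := le_trans (by nlinarith) hdir
  calc c / 16 = c * (1 / 4) * (1 / 4) := by ring
    _ ≤ c * (1 / 4) * ((b - a) * ∫ x in a..b, T' x ^ 2) := by gcongr
    _ ≤ (∫ x, f (T x)) * ∫ x in a..b, T' x ^ 2 := by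
        rw [← mul_assoc]; exact mul_le_mul_of_nonneg_right hreact hdir_nonneg
    _ ≤ (∫ x, f (T x)) * ∫ x, T' x ^ 2 :=
        mul_le_mul_of_nonneg_left hdir_le (integral_nonneg hfT)
end

section
/- Let f : [0,1] → ℝ be continuous with f(0)=f(1)=0, f>0 on (0,1) and inf_{s∈[ε,1-ε]} f(s) ≥ cε for all ε ∈ (0,1/2). Then there exists C > 0 depending only on c such that for every continuously differentiable T : [0,H] → [0,1], (∫₀^H |T'(y)|² dy) · (∫₀^H f(T(y)) dy) ≥ C · (sup_{y₁,y₂ ∈ [0,H]} |T(y₁) - T(y₂)|)³. -/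
/-!
Substituting `s = T y` turns `∫ √(f (T y)) * T' y` over `[y₁, y₂]` into `∫ √(f s)` over
`[T y₁, T y₂]`. On the middle third of that interval of length `M` the lower bound gives
`f ≥ c M / 3`, so this integral is at least `(M / 3) √(c M / 3)`, whose square is `c M³ / 27`.
By Cauchy–Schwarz the square is at most `(∫ f (T y)) (∫ T' y ^ 2)` over `[0, H]`.
-/

open Set MeasureTheory

theorem sq_integral_mul_le_integral_sq_mul_integral_sq {α : Type*} [MeasurableSpace α]
    {μ : Measure α} {u v : α → ℝ} (hu : Integrable (fun x => u x ^ 2) μ)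
    (hv : Integrable (fun x => v x ^ 2) μ) (huv : Integrable (fun x => u x * v x) μ) :
    (∫ x, u x * v x ∂μ) ^ 2 ≤ (∫ x, u x ^ 2 ∂μ) * ∫ x, v x ^ 2 ∂μ := by
  have hquad : ∀ l : ℝ, 0 ≤ (∫ x, u x ^ 2 ∂μ) * (l * l) + (-2 * ∫ x, u x * v x ∂μ) * l
      + ∫ x, v x ^ 2 ∂μ := by
    intro l
    have hmixed : Integrable (fun x => l * l * u x ^ 2 + -2 * l * (u x * v x)) μ :=
      (hu.const_mul _).add (huv.const_mul _)
    calc (0 : ℝ) ≤ ∫ x, (l * u x - v x) ^ 2 ∂μ := integral_nonneg fun x => sq_nonneg _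
      _ = ∫ x, l * l * u x ^ 2 + -2 * l * (u x * v x) + v x ^ 2 ∂μ := by
        congr 1; ext x; ring
      _ = _ := by
        rw [integral_add hmixed hv, integral_add (hu.const_mul _) (huv.const_mul _),
          integral_const_mul, integral_const_mul]
        ring
  have := discrim_le_zero hquad
  rw [discrim] at this
  linarith

theorem sq_intervalIntegral_mul_le_of_mem_Icc {u v : ℝ → ℝ} (hu : Continuous u)
    (hv : Continuous v) {a b y₁ y₂ : ℝ} (hy₁ : y₁ ∈ Icc a b) (hy₂ : y₂ ∈ Icc a b) :
    (∫ y in y₁..y₂, u y * v y) ^ 2 ≤ (∫ y in a..b, u y ^ 2) * ∫ y in a..b, v y ^ 2 := by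
  have hab : a ≤ b := hy₁.1.trans hy₁.2
  have hsub : uIoc y₁ y₂ ⊆ Ioc a b := by
    rw [← uIoc_of_le hab]
    exact uIoc_subset_uIoc_of_uIcc_subset_uIcc
      (uIcc_subset_uIcc (Icc_subset_uIcc hy₁) (Icc_subset_uIcc hy₂))
  have hmono : ∀ w : ℝ → ℝ, Continuous w →
      ∫ y in uIoc y₁ y₂, w y ^ 2 ≤ ∫ y in a..b, w y ^ 2 := fun w hw => by
    rw [intervalIntegral.integral_of_le hab]
    exact setIntegral_mono_set (hw.pow 2).integrableOn_Ioc
      (Filter.Eventually.of_forall fun y => sq_nonneg _) hsub.eventuallyLE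
  calc (∫ y in y₁..y₂, u y * v y) ^ 2 = (∫ y in uIoc y₁ y₂, u y * v y) ^ 2 := by
        rw [← sq_abs, intervalIntegral.abs_integral_eq_abs_integral_uIoc, sq_abs]
    _ ≤ (∫ y in uIoc y₁ y₂, u y ^ 2) * ∫ y in uIoc y₁ y₂, v y ^ 2 :=
        sq_integral_mul_le_integral_sq_mul_integral_sq (hu.pow 2).integrableOn_uIoc
          (hv.pow 2).integrableOn_uIoc (hu.mul hv).integrableOn_uIoc
    _ ≤ (∫ y in a..b, u y ^ 2) * ∫ y in a..b, v y ^ 2 :=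
        mul_le_mul (hmono u hu) (hmono v hv)
          (setIntegral_nonneg measurableSet_uIoc fun y _ => sq_nonneg _)
          (intervalIntegral.integral_nonneg hab fun y _ => sq_nonneg _)

theorem mul_abs_sub_pow_three_le_sq_integral_sqrt {c : ℝ} (hc : 0 ≤ c) {f : ℝ → ℝ}
    (hf : ContinuousOn f (Icc 0 1))
    (hlow : ∀ ε ∈ Ioo (0:ℝ) (1/2), ∀ s ∈ Icc ε (1 - ε), c * ε ≤ f s)
    {a b : ℝ} (ha : a ∈ Icc (0:ℝ) 1) (hb : b ∈ Icc (0:ℝ) 1) :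
    c / 27 * |b - a| ^ 3 ≤ (∫ s in a..b, √(f s)) ^ 2 := by
  wlog hab : a ≤ b generalizing a b
  · rw [abs_sub_comm, intervalIntegral.integral_symm, neg_sq]
    exact this hb ha (le_of_not_ge hab)
  set ε := (b - a) / 3 with hε
  rcases (div_nonneg (sub_nonneg.2 hab) zero_le_three : 0 ≤ ε).eq_or_lt with hε0 | hε0
  · have hba : b - a = 0 := by linarith
    rw [hba]
    simpa using sq_nonneg _
  have hεmem : ε ∈ Ioo (0:ℝ) (1/2) := ⟨hε0, by linarith [ha.1, hb.2]⟩
  have hsqrt : ContinuousOn (fun s => √(f s)) (Icc 0 1) := hf.sqrt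
  have hmiddle : ε * √(c * ε) ≤ ∫ s in (a + ε)..(b - ε), √(f s) := by
    have hlen : ε * √(c * ε) = ∫ _ in (a + ε)..(b - ε), √(c * ε) := by
      rw [intervalIntegral.integral_const, smul_eq_mul]; congr 1; linarith
    rw [hlen]
    refine intervalIntegral.integral_mono_on (by linarith) intervalIntegrable_const
      (hsqrt.mono ?_).intervalIntegrable fun s hs => Real.sqrt_le_sqrt ?_
    · rw [uIcc_of_le (by linarith)]
      exact Icc_subset_Icc (by linarith [ha.1]) (by linarith [hb.2])
    · exact hlow ε hεmem s ⟨by linarith [hs.1, ha.1], by linarith [hs.2, hb.2]⟩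
  have houter : ∫ s in (a + ε)..(b - ε), √(f s) ≤ ∫ s in a..b, √(f s) :=
    intervalIntegral.integral_mono_interval (by linarith) (by linarith) (by linarith)
      (Filter.Eventually.of_forall fun s => Real.sqrt_nonneg _)
      (hsqrt.mono (by rw [uIcc_of_le hab]; exact Icc_subset_Icc ha.1 hb.2)).intervalIntegrable
  calc c / 27 * |b - a| ^ 3 = (ε * √(c * ε)) ^ 2 := by
        rw [abs_of_nonneg (sub_nonneg.2 hab), mul_pow, Real.sq_sqrt (by positivity), hε]
        ring
    _ ≤ (∫ s in a..b, √(f s)) ^ 2 :=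
        pow_le_pow_left₀ (by positivity) (hmiddle.trans houter) 2

/-- Oscillation-cubed estimate: the product of the Dirichlet and
reaction integrals dominates the cube of the oscillation of T. -/
theorem oscillation_cubed (c : ℝ) (hc : 0 < c) :
    ∃ C > 0, ∀ f : ℝ → ℝ, ContinuousOn f (Icc 0 1) → f 0 = 0 → f 1 = 0 →
      (∀ x ∈ Ioo (0:ℝ) 1, 0 < f x) →
      (∀ ε ∈ Ioo (0:ℝ) (1/2), ∀ s ∈ Icc ε (1 - ε), c * ε ≤ f s) →
      ∀ H : ℝ, 0 < H → ∀ T T' : ℝ → ℝ,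
        (∀ y, HasDerivAt T (T' y) y) → Continuous T' →
        (∀ y, T y ∈ Icc (0:ℝ) 1) →
        ∀ y₁ ∈ Icc (0:ℝ) H, ∀ y₂ ∈ Icc (0:ℝ) H,
          C * |T y₁ - T y₂| ^ 3
            ≤ (∫ y in (0:ℝ)..H, (T' y) ^ 2) * (∫ y in (0:ℝ)..H, f (T y)) := by
  refine ⟨c / 27, by positivity, ?_⟩
  intro f hf hf0 hf1 hfpos hlow H _ T T' hT hT' hTmem y₁ hy₁ y₂ hy₂
  have hfT : ∀ y, 0 ≤ f (T y) := fun y => by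
    rcases (hTmem y).1.eq_or_lt with h0 | h0
    · rw [← h0, hf0]
    rcases (hTmem y).2.eq_or_lt with h1 | h1
    · rw [h1, hf1]
    exact (hfpos _ ⟨h0, h1⟩).le
  have hTc : Continuous T := continuous_iff_continuousAt.2 fun y => (hT y).continuousAt
  have hsubst : ∫ y in y₁..y₂, √(f (T y)) * T' y = ∫ s in T y₁..T y₂, √(f s) :=
    intervalIntegral.integral_comp_mul_deriv' (fun y _ => hT y) hT'.continuousOn
      (hf.sqrt.mono (image_subset_iff.2 fun y _ => hTmem y))
  have hreaction : ∫ y in (0:ℝ)..H, √(f (T y)) ^ 2 = ∫ y in (0:ℝ)..H, f (T y) :=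
    intervalIntegral.integral_congr fun y _ => Real.sq_sqrt (hfT y)
  calc c / 27 * |T y₁ - T y₂| ^ 3 ≤ (∫ s in T y₁..T y₂, √(f s)) ^ 2 := by
        rw [abs_sub_comm]
        exact mul_abs_sub_pow_three_le_sq_integral_sqrt hc.le hf hlow (hTmem y₁) (hTmem y₂)
    _ = (∫ y in y₁..y₂, √(f (T y)) * T' y) ^ 2 := by rw [hsubst]
    _ ≤ (∫ y in (0:ℝ)..H, √(f (T y)) ^ 2) * ∫ y in (0:ℝ)..H, T' y ^ 2 :=
        sq_intervalIntegral_mul_le_of_mem_Icc (hf.sqrt.comp_continuous hTc hTmem) hT' hy₁ hy₂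
    _ = _ := by rw [hreaction, mul_comm]
end
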